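/- Let G be a graph of order n ≥ 2 with a dominating vertex w and largest signless Laplacian eigenvalue q = q(G) > n − 1, and let x = (x_1,…,x_n) be a positive unit eigenvector of Q(G) for q. Then x_w² ≤ (n−1)/((q−n+1)² + n − 1). -/

import Mathlib

open scoped Classical

/-- The signless Laplacian matrix `Q(G) = D(G) + A(G)` of a finite simple graph. -/
noncomputable def signlessLaplacian {V : Type*} [Fintype V] (G : SimpleGraph V) :
    Matrix V V ℝ :=
  Matrix.diagonal (fun v => (G.degree v : ℝ)) + G.adjMatrix ℝ

/-- The `Q`-index of `G`: the largest eigenvalue of the signless Laplacian. -/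
noncomputable def qIndex {V : Type*} [Fintype V] (G : SimpleGraph V) : ℝ :=
  sSup (spectrum ℝ (signlessLaplacian G))

/-- `G` contains a copy of `F` (a subgraph isomorphic to `F`). -/
def HasCopy {α β : Type*} (F : SimpleGraph α) (G : SimpleGraph β) : Prop :=
  ∃ f : F →g G, Function.Injective f

/-- The graph `S_{n,k}^+`: a `k`-clique joined to an independent set of `n - k`
vertices, with one extra edge added inside the independent set
(between vertices `k` and `k+1`). -/
def SnkPlus (n k : ℕ) : SimpleGraph (Fin n) where
  Adj i j := i ≠ j ∧ ((i : ℕ) < k ∨ (j : ℕ) < k ∨ ((i : ℕ) < k + 2 ∧ (j : ℕ) < k + 2))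
  symm.symm := by intro i j h; exact ⟨h.1.symm, by tauto⟩
  loopless.irrefl := by intro i h; exact h.1 rfl

/-- `L_{t,k} = K_1 ∨ (t · K_k)`: `t` copies of `K_{k+1}` sharing one common vertex
(vertex `0`, the center). -/
def Lgraph (t k : ℕ) : SimpleGraph (Fin (t * k + 1)) where
  Adj i j := i ≠ j ∧ ((i : ℕ) = 0 ∨ (j : ℕ) = 0 ∨ ((i : ℕ) - 1) / k = ((j : ℕ) - 1) / k)
  symm.symm := by intro i j h; exact ⟨h.1.symm, by tauto⟩
  loopless.irrefl := by intro i h; exact h.1 rfl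

/-- Disjoint union of `t` copies of `K_{k+1}`. -/
def disjointCliques (t k : ℕ) : SimpleGraph (Fin t × Fin (k + 1)) where
  Adj i j := i ≠ j ∧ i.1 = j.1
  symm.symm := by intro i j h; exact ⟨h.1.symm, h.2.symm⟩
  loopless.irrefl := by intro i h; exact h.1 rfl

/-- `K_1 ∨ ((t-1)·K_k ∪ K_{k+1})` on `t*k + 2` vertices: vertex `0` is the center,
the last block has `k+1` vertices. -/
def Mgraph (t k : ℕ) : SimpleGraph (Fin (t * k + 2)) where
  Adj i j := i ≠ j ∧ ((i : ℕ) = 0 ∨ (j : ℕ) = 0 ∨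
    min (((i : ℕ) - 1) / k) (t - 1) = min (((j : ℕ) - 1) / k) (t - 1))
  symm.symm := by intro i j h; exact ⟨h.1.symm, by tauto⟩
  loopless.irrefl := by intro i h; exact h.1 rfl

/-- Two disjoint graphs `L_{s,k}` and `L_{t,k}` with their centers joined by an edge. -/
def DLgraph (s t k : ℕ) : SimpleGraph (Fin (s * k + 1) ⊕ Fin (t * k + 1)) where
  Adj x y :=
    match x, y with
    | .inl a, .inl b => (Lgraph s k).Adj a b
    | .inr a, .inr b => (Lgraph t k).Adj a b
    | .inl a, .inr b => (a : ℕ) = 0 ∧ (b : ℕ) = 0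
    | .inr a, .inl b => (a : ℕ) = 0 ∧ (b : ℕ) = 0
  symm.symm := by
    intro x y h
    cases x <;> cases y <;> simp_all <;>
      first
        | exact ((Lgraph _ _).symm.symm _ _ h)
  loopless.irrefl := by
    intro x h
    cases x
    · exact (Lgraph s k).loopless.irrefl _ h
    · exact (Lgraph t k).loopless.irrefl _ h

/-- Number of edges of `G` lying inside the vertex set `X`. -/
noncomputable def edgesWithin {V : Type*} [Fintype V] (G : SimpleGraph V) (X : Finset V) : ℕ :=
  (G.induce (X : Set V)).edgeFinset.card

/-- Number of edges of `G` joining the disjoint vertex sets `X` and `Y`. -/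
noncomputable def edgesBetween {V : Type*} [Fintype V] (G : SimpleGraph V)
    (X Y : Finset V) : ℕ :=
  ((X ×ˢ Y).filter fun p => G.Adj p.1 p.2).card
/-- For a graph with dominating vertex `w`, `q > n - 1` and positive unit
eigenvector `x` to `q`, one has `x_w² ≤ (n-1)/((q-n+1)² + n - 1)`. -/
theorem eigenvector_entry_bound {V : Type*} [Fintype V] (G : SimpleGraph V)
    (hn : 2 ≤ Fintype.card V)
    (w : V) (hw : ∀ v, v ≠ w → G.Adj w v)
    (hq : (Fintype.card V : ℝ) - 1 < qIndex G)
    (x : V → ℝ) (hpos : ∀ v, 0 < x v) (hunit : ∑ v, x v ^ 2 = 1)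
    (heig : Matrix.mulVec (signlessLaplacian G) x = qIndex G • x) :
    x w ^ 2 ≤ ((Fintype.card V : ℝ) - 1) /
      ((qIndex G - Fintype.card V + 1) ^ 2 + Fintype.card V - 1) := by
  classical
  set n := Fintype.card V
  set q := qIndex G
  have hnb : G.neighborFinset w = Finset.univ.erase w := by
    ext v
    simp only [SimpleGraph.mem_neighborFinset, Finset.mem_erase, Finset.mem_univ, and_true]
    constructor
    · intro h; exact (G.ne_of_adj h).symm
    · intro h; exact hw v h
  have hdeg : (G.degree w : ℝ) = (n : ℝ) - 1 := by
    have : G.degree w = n - 1 := by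
      rw [SimpleGraph.degree, hnb, Finset.card_erase_of_mem (Finset.mem_univ w),
        Finset.card_univ]
    rw [this, Nat.cast_sub (by omega)]
    norm_num
  have hkey : (q - (n : ℝ) + 1) * x w = ∑ v ∈ Finset.univ.erase w, x v := by
    have h1 := congrFun heig w
    rw [signlessLaplacian, Matrix.add_mulVec] at h1
    simp only [Pi.add_apply, Matrix.mulVec_diagonal, SimpleGraph.adjMatrix_mulVec_apply,
      Pi.smul_apply, smul_eq_mul, hnb, hdeg] at h1
    linarith
  have hcard : (Finset.univ.erase w).card = n - 1 := by
    rw [Finset.card_erase_of_mem (Finset.mem_univ w), Finset.card_univ]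
  have hsumsq : ∑ v ∈ Finset.univ.erase w, x v ^ 2 = 1 - x w ^ 2 := by
    have := Finset.add_sum_erase Finset.univ (fun v => x v ^ 2) (Finset.mem_univ w)
    simp only [hunit] at this
    linarith
  have hcs : (∑ v ∈ Finset.univ.erase w, x v) ^ 2 ≤
      ((n : ℝ) - 1) * (1 - x w ^ 2) := by
    have := sq_sum_le_card_mul_sum_sq (s := Finset.univ.erase w) (f := x)
    rw [hsumsq, hcard] at this
    calc (∑ v ∈ Finset.univ.erase w, x v) ^ 2
        ≤ ((n - 1 : ℕ) : ℝ) * (1 - x w ^ 2) := this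
      _ = ((n : ℝ) - 1) * (1 - x w ^ 2) := by
          rw [Nat.cast_sub (by omega)]; norm_num
  have hmain : (q - (n : ℝ) + 1) ^ 2 * x w ^ 2 ≤ ((n : ℝ) - 1) * (1 - x w ^ 2) := by
    calc (q - (n : ℝ) + 1) ^ 2 * x w ^ 2 = ((q - (n : ℝ) + 1) * x w) ^ 2 := by ring
      _ = (∑ v ∈ Finset.univ.erase w, x v) ^ 2 := by rw [hkey]
      _ ≤ _ := hcs
  have hden : 0 < (q - (n : ℝ) + 1) ^ 2 + (n : ℝ) - 1 := by
    have hn1 : (2 : ℝ) ≤ (n : ℝ) := by exact_mod_cast hn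
    nlinarith
  rw [le_div_iff₀ hden]
  nlinarith [hmain]
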